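/- arXiv:1611.09331 — 3 statements merged into one kernel-verified Lean document; each statement's English description precedes it below -/
import Mathlib

section
/- A closed line segment [A,B] of positive length in ℝ² is not a disk, and moreover there exist a line segment K₁ isometric to [A,B] and a triangle with vertices A₀, A₁, A₂ containing both [A,B] and K₁ such that for every j ∈ {0,1,2} and k ∈ {0,1}, the segment K_{1−k} is not contained in the convex hull of K_k ∪ ({A₀,A₁,A₂} \ {A_j}), where K₀ = [A,B]. -/
/-!
A segment lies on a line, so it has empty interior in the plane, while a disk of positive radius
has nonempty interior and a disk of radius `0` is a single point.

For the configuration, work in the frame `(A; B - A, rot (B - A))`, in which `[A, B]` is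
`[(0,0), (1,0)]`. Its copy is `[(0,1/2), (3/5,-3/10)]`, the image of `[A, B]` under a rotation
with cosine `3/5`, and the triangle is `(-3,0), (1,-1), (1,1)`. Each of the six non-inclusions
is witnessed by an endpoint of `K (1 - k)` at which a linear functional `a s + b t` is strictly
larger than at both endpoints of `K k` and at the two remaining vertices.
-/

open RealInnerProductSpace

noncomputable section

/-- The Euclidean plane. -/
abbrev Pt : Type := EuclideanSpace ℝ (Fin 2)

/-- Counterclockwise rotation by π/2. -/
def rot (v : Pt) : Pt := WithLp.toLp 2 ![-(v 1), v 0]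

/-- The (directed) line through `p` with direction `v`. -/
def dline (p v : Pt) : Set Pt := {x : Pt | ∃ t : ℝ, x = p + t • v}

open Module Metric

section ConvexGeometry

variable {E : Type*} [AddCommGroup E] [Module ℝ E]

theorem smul_add_smul_add_smul_mem_convexHull {a b c : ℝ} (ha : 0 ≤ a) (hb : 0 ≤ b)
    (hc : 0 ≤ c) (habc : a + b + c = 1) (x y z : E) :
    a • x + b • y + c • z ∈ convexHull ℝ {x, y, z} := by
  have := (convex_convexHull ℝ ({x, y, z} : Set E)).sum_mem (t := Finset.univ)
    (w := ![a, b, c]) (z := ![x, y, z]) ?_ ?_ ?_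
  · simpa [Fin.sum_univ_three] using this
  · intro i _; fin_cases i <;> assumption
  · simpa [Fin.sum_univ_three] using habc
  · intro i _; fin_cases i <;> apply subset_convexHull <;> simp

theorem not_subset_convexHull_segment_union (f : E →ₗ[ℝ] ℝ) {K T : Set E} {e P Q : E}
    (he : e ∈ K) (hP : f P < f e) (hQ : f Q < f e) (hT : ∀ x ∈ T, f x < f e) :
    ¬ K ⊆ convexHull ℝ (segment ℝ P Q ∪ T) := by
  have hconv : Convex ℝ {x | f x < f e} := convex_halfSpace_lt f.isLinear _
  intro hK
  refine lt_irrefl (f e) (convexHull_min ?_ hconv (hK he))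
  rintro x (hx | hx)
  exacts [hconv.segment_subset hP hQ hx, hT x hx]

end ConvexGeometry

theorem segment_ne_closedBall {V : Type*} [NormedAddCommGroup V] [NormedSpace ℝ V]
    [FiniteDimensional ℝ V] (hV : 1 < finrank ℝ V) {A B : V} (hAB : A ≠ B) (c : V) (r : ℝ) :
    segment ℝ A B ≠ closedBall c r := by
  intro h
  rcases lt_or_ge 0 r with hr | hr
  · have hspan : affineSpan ℝ {A, B} = ⊤ := by
      refine affineSpan_eq_top_of_nonempty_interior ?_
      rw [convexHull_pair, h, interior_closedBall _ hr.ne']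
      exact nonempty_ball.2 hr
    have := (collinear_iff_finrank_le_one (k := ℝ)).1 (collinear_pair ℝ A B)
    rw [← direction_affineSpan, hspan, AffineSubspace.direction_top, finrank_top] at this
    omega
  · have hA : dist A c ≤ 0 := (h ▸ left_mem_segment ℝ A B : A ∈ closedBall c r).trans hr
    have hB : dist B c ≤ 0 := (h ▸ right_mem_segment ℝ A B : B ∈ closedBall c r).trans hr
    exact hAB ((dist_le_zero.1 hA).trans (dist_le_zero.1 hB).symm)

theorem exists_isometryEquiv_image_segment {V : Type*} [NormedAddCommGroup V]
    [NormedSpace ℝ V] (R : V ≃ₗᵢ[ℝ] V) (A B P : V) :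
    ∃ φ : V ≃ᵢ V, φ '' segment ℝ A B = segment ℝ P (P + R (B - A)) := by
  refine ⟨(IsometryEquiv.subRight A).trans (R.toIsometryEquiv.trans (IsometryEquiv.addLeft P)),
    ?_⟩
  rw [segment_eq_image', segment_eq_image', Set.image_image]
  refine Set.image_congr fun θ _ => ?_
  simp

lemma rot_add (x y : Pt) : rot (x + y) = rot x + rot y := by
  ext i; fin_cases i <;> simp [rot]; ring

lemma rot_smul (r : ℝ) (x : Pt) : rot (r • x) = r • rot x := by
  ext i; fin_cases i <;> simp [rot]

lemma inner_self_rot (x : Pt) : ⟪x, rot x⟫ = 0 := by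
  simp [PiLp.inner_apply, Fin.sum_univ_two, rot]; ring

lemma norm_rot (x : Pt) : ‖rot x‖ = ‖x‖ := by
  simp [EuclideanSpace.norm_eq, Fin.sum_univ_two, rot, add_comm]

def planeRotation (c s : ℝ) (h : c ^ 2 + s ^ 2 = 1) : Pt ≃ₗᵢ[ℝ] Pt :=
  LinearIsometry.toLinearIsometryEquiv
    { toFun x := c • x + s • rot x
      map_add' x y := by simp only [rot_add, smul_add]; abel
      map_smul' r x := by simp only [rot_smul, smul_comm _ r, smul_add, RingHom.id_apply]
      norm_map' x := by
        simp only [LinearMap.coe_mk, AddHom.coe_mk]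
        rw [← sq_eq_sq₀ (norm_nonneg _) (norm_nonneg _), norm_add_sq_real, norm_smul, norm_smul,
          norm_rot, real_inner_smul_left, real_inner_smul_right, inner_self_rot]
        simp only [Real.norm_eq_abs, mul_pow, sq_abs]
        linear_combination ‖x‖ ^ 2 * h }
    rfl

lemma planeRotation_apply (c s : ℝ) (h : c ^ 2 + s ^ 2 = 1) (x : Pt) :
    planeRotation c s h x = c • x + s • rot x := rfl

def framePt (A B : Pt) (s t : ℝ) : Pt := A + s • (B - A) + t • rot (B - A)

def frameCoord (A B : Pt) (a b : ℝ) : Pt →ₗ[ℝ] ℝ :=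
  (‖B - A‖ ^ 2)⁻¹ • innerₛₗ ℝ (a • (B - A) + b • rot (B - A))

lemma frameCoord_framePt {A B : Pt} (hAB : A ≠ B) (a b s t : ℝ) :
    frameCoord A B a b (framePt A B s t) = frameCoord A B a b A + (a * s + b * t) := by
  have hu : ‖B - A‖ ≠ 0 := norm_ne_zero_iff.2 (sub_ne_zero.2 hAB.symm)
  simp only [frameCoord, framePt, LinearMap.smul_apply, innerₛₗ_apply_apply, inner_add_left,
    inner_add_right, real_inner_smul_left, real_inner_smul_right, inner_self_rot, norm_rot,
    real_inner_comm (B - A) (rot (B - A)), real_inner_self_eq_norm_sq, smul_eq_mul]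
  field_simp
  ring

lemma framePt_mem_convexHull (A B : Pt) (s₀ t₀ s₁ t₁ s₂ t₂ a b c : ℝ) (ha : 0 ≤ a)
    (hb : 0 ≤ b) (hc : 0 ≤ c) (habc : a + b + c = 1) :
    framePt A B (a * s₀ + b * s₁ + c * s₂) (a * t₀ + b * t₁ + c * t₂) ∈
      convexHull ℝ {framePt A B s₀ t₀, framePt A B s₁ t₁, framePt A B s₂ t₂} := by
  convert smul_add_smul_add_smul_mem_convexHull ha hb hc habc _ _ _ using 1
  obtain rfl : c = 1 - a - b := by linarith
  simp only [framePt]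
  module

def triangleVertices (A B : Pt) : Fin 3 → Pt :=
  ![framePt A B (-3) 0, framePt A B 1 (-1), framePt A B 1 1]

def segmentPair (A B : Pt) : Fin 2 → Set Pt :=
  ![segment ℝ (framePt A B 0 0) (framePt A B 1 0),
    segment ℝ (framePt A B 0 (1/2)) (framePt A B (3/5) (-3/10))]

lemma segmentPair_subset_convexHull (A B : Pt) (k : Fin 2) :
    segmentPair A B k ⊆ convexHull ℝ {triangleVertices A B 0, triangleVertices A B 1,
      triangleVertices A B 2} := by
  have hull := framePt_mem_convexHull A B (-3) 0 1 (-1) 1 1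
  simp only [triangleVertices, Matrix.cons_val_zero, Matrix.cons_val_one, Matrix.cons_val_two,
    Matrix.head_cons, Matrix.tail_cons]
  fin_cases k <;> refine (convex_convexHull ℝ _).segment_subset ?_ ?_
  · convert hull (1/4) (3/8) (3/8) (by norm_num) (by norm_num) (by norm_num)
      (by norm_num) using 2 <;> norm_num
  · convert hull 0 (1/2) (1/2) (by norm_num) (by norm_num) (by norm_num)
      (by norm_num) using 2 <;> norm_num
  · convert hull (1/4) (1/8) (5/8) (by norm_num) (by norm_num) (by norm_num)
      (by norm_num) using 2 <;> norm_num
  · convert hull (1/10) (3/5) (3/10) (by norm_num) (by norm_num) (by norm_num)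
      (by norm_num) using 2 <;> norm_num

lemma not_segmentPair_subset_convexHull {A B : Pt} (hAB : A ≠ B) (j : Fin 3) (k : Fin 2) :
    ¬ segmentPair A B (1 - k) ⊆ convexHull ℝ (segmentPair A B k ∪
      ({triangleVertices A B 0, triangleVertices A B 1, triangleVertices A B 2} \
        {triangleVertices A B j})) := by
  have hcoord := frameCoord_framePt hAB
  fin_cases j <;> fin_cases k <;>
    simp only [segmentPair, triangleVertices, Fin.reduceFinMk, Fin.isValue, Fin.reduceSub,
      Matrix.cons_val_zero, Matrix.cons_val_one, Matrix.cons_val_two, Matrix.head_cons,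
      Matrix.tail_cons]
  · exact not_subset_convexHull_segment_union (frameCoord A B (-1) 1) (left_mem_segment ℝ _ _)
      (by norm_num [hcoord]) (by norm_num [hcoord]) (by norm_num [hcoord])
  · exact not_subset_convexHull_segment_union (frameCoord A B (-2) (-1)) (left_mem_segment ℝ _ _)
      (by norm_num [hcoord]) (by norm_num [hcoord]) (by norm_num [hcoord])
  · exact not_subset_convexHull_segment_union (frameCoord A B 0 (-1)) (right_mem_segment ℝ _ _)
      (by norm_num [hcoord]) (by norm_num [hcoord]) (by norm_num [hcoord])
  · exact not_subset_convexHull_segment_union (frameCoord A B 1 (-1)) (right_mem_segment ℝ _ _)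
      (by norm_num [hcoord]) (by norm_num [hcoord]) (by norm_num [hcoord])
  · exact not_subset_convexHull_segment_union (frameCoord A B 0 1) (left_mem_segment ℝ _ _)
      (by norm_num [hcoord]) (by norm_num [hcoord]) (by norm_num [hcoord])
  · exact not_subset_convexHull_segment_union (frameCoord A B 1 1) (right_mem_segment ℝ _ _)
      (by norm_num [hcoord]) (by norm_num [hcoord]) (by norm_num [hcoord])

lemma exists_isometryEquiv_image_eq_segmentPair (A B : Pt) :
    ∃ φ : Pt ≃ᵢ Pt, φ '' segment ℝ A B = segmentPair A B 1 := by
  obtain ⟨φ, hφ⟩ := exists_isometryEquiv_image_segment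
    (planeRotation (3/5) (-4/5) (by norm_num)) A B (framePt A B 0 (1/2))
  refine ⟨φ, hφ.trans ?_⟩
  simp only [segmentPair, Matrix.cons_val_one, planeRotation_apply]
  congr 1
  simp only [framePt]
  module

/-- A nondegenerate closed segment is not a disk; moreover there are an isometric
copy of it and a triangle containing both copies witnessing the failure of the
combinatorial property of Theorem 1 (iii). -/
theorem stmt4 (A B : Pt) (hAB : A ≠ B) :
    (¬ ∃ (c : Pt) (r : ℝ), 0 ≤ r ∧ segment ℝ A B = Metric.closedBall c r) ∧
    ∃ (K : Fin 2 → Set Pt) (φ : Pt ≃ᵢ Pt) (Av : Fin 3 → Pt),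
      K 0 = segment ℝ A B ∧ K 1 = φ '' segment ℝ A B ∧
      (∀ k : Fin 2, K k ⊆ convexHull ℝ {Av 0, Av 1, Av 2}) ∧
      ∀ (j : Fin 3) (k : Fin 2),
        ¬ (K (1 - k) ⊆ convexHull ℝ (K k ∪ (({Av 0, Av 1, Av 2} : Set Pt) \ {Av j}))) := by
  obtain ⟨φ, hφ⟩ := exists_isometryEquiv_image_eq_segmentPair A B
  refine ⟨fun ⟨c, r, _, h⟩ => segment_ne_closedBall (by simp) hAB c r h, segmentPair A B, φ,
    triangleVertices A B, ?_, hφ.symm, segmentPair_subset_convexHull A B,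
    not_segmentPair_subset_convexHull hAB⟩
  simp [segmentPair, framePt]
end
end

section
/- Let D₀ and D₁ be two closed disks of equal radius r > 0 in ℝ². If ℓ₁ and ℓ₂ are two distinct common supporting lines of D₀ and D₁ (each directed so that both disks lie in the closed left halfplane), then it cannot happen that for both i ∈ {1,2}, the first point of (D₀ ∪ D₁) ∩ ℓ_i along the direction of ℓ_i lies in D₀ \ D₁ while the last such point lies in D₁ \ D₀. -/
/-!
A line directed by `v` with a disk of radius `r` and centre `c` on its closed left side can touch
the disk only at `c - r ν`, where `ν` is the unit left normal of `v`. Hence on a common supporting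
line the tangent point on `D₁` minus the one on `D₀` equals `c₁ - c₀`, and if `D₀`'s point comes
strictly first, `c₁ - c₀` is a positive multiple of `v`. Two such lines thus have the same oriented
direction, hence the same normal, hence the same tangent point on `D₀`, so they coincide.
-/

open RealInnerProductSpace

noncomputable section

/-- F is the first point of S along the directed line through p with direction v. -/
def IsFirstOn (p v : Pt) (S : Set Pt) (F : Pt) : Prop :=
  F ∈ S ∧ ∃ s : ℝ, F = p + s • v ∧
    ∀ (x : Pt) (t : ℝ), x ∈ S → x = p + t • v → s ≤ t

/-- L is the last point of S along the directed line through p with direction v. -/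
def IsLastOn (p v : Pt) (S : Set Pt) (L : Pt) : Prop :=
  L ∈ S ∧ ∃ s : ℝ, L = p + s • v ∧
    ∀ (x : Pt) (t : ℝ), x ∈ S → x = p + t • v → t ≤ s

section SupportingHyperplane

variable {E : Type*} [NormedAddCommGroup E] [InnerProductSpace ℝ E]

theorem eq_sub_smul_of_inner_eq_zero {c p n x : E} {r : ℝ} (hn : n ≠ 0)
    (hs : ∀ y ∈ Metric.closedBall c r, 0 ≤ ⟪y - p, n⟫)
    (hx : x ∈ Metric.closedBall c r) (hxp : ⟪x - p, n⟫ = 0) :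
    x = c - (r / ‖n‖) • n := by
  have hr : 0 ≤ r := dist_nonneg.trans hx
  have hn' : 0 < ‖n‖ := norm_pos_iff.mpr hn
  set w := (r / ‖n‖) • n
  have hw : ‖w‖ = r := by
    rw [norm_smul, Real.norm_eq_abs, abs_of_nonneg (by positivity), div_mul_cancel₀ _ hn'.ne']
  have hwn : ⟪w, n⟫ = r * ‖n‖ := by
    rw [real_inner_smul_left, real_inner_self_eq_norm_sq]
    field_simp
  have hcx : ‖c - x‖ ≤ r := by rw [← dist_eq_norm, dist_comm]; exact hx
  -- the halfspace condition at the ball's point `c - w`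
  have hle : r * ‖n‖ ≤ ⟪c - x, n⟫ := by
    have h := hs (c - w) (by simp [hw])
    rw [show c - w - p = (c - x) + (x - p) - w by abel, inner_sub_left, inner_add_left,
      hxp, hwn] at h
    linarith
  have hcxw : ⟪c - x, w⟫ = r / ‖n‖ * ⟪c - x, n⟫ := real_inner_smul_right _ _ _
  -- `‖c - x - w‖² = ‖c - x‖² - 2 ⟪c - x, w⟫ + r² ≤ r² - 2 r² + r²`
  have hsq : ‖c - x - w‖ ^ 2 ≤ 0 := by
    have : r / ‖n‖ * (r * ‖n‖) = r ^ 2 := by field_simp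
    have : r / ‖n‖ * (r * ‖n‖) ≤ r / ‖n‖ * ⟪c - x, n⟫ := by gcongr
    rw [norm_sub_sq_real, hw, hcxw]
    nlinarith [norm_nonneg (c - x)]
  have : c - x - w = 0 := norm_eq_zero.mp (by nlinarith [norm_nonneg (c - x - w)])
  rw [sub_eq_zero, sub_eq_iff_eq_add] at this
  rw [this]
  abel

theorem smul_pos_div_norm_smul {n : E} {k : ℝ} (hk : 0 < k) (r : ℝ) :
    (r / ‖k • n‖) • (k • n) = (r / ‖n‖) • n := by
  rcases eq_or_ne n 0 with rfl | hn
  · simp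
  rw [smul_smul, norm_smul, Real.norm_eq_abs, abs_of_pos hk]
  congr 1
  field_simp [norm_ne_zero_iff.mpr hn]

end SupportingHyperplane

theorem inner_rot_self (v : Pt) : ⟪v, rot v⟫ = 0 := by
  simp [rot, PiLp.inner_apply, Fin.sum_univ_two]
  ring

theorem rot_ne_zero {v : Pt} (hv : v ≠ 0) : rot v ≠ 0 := by
  contrapose! hv
  ext i
  have h0 := congrArg (· 0) hv
  have h1 := congrArg (· 1) hv
  simp only [rot] at h0 h1
  fin_cases i <;> simp_all

theorem rot_smul_s12 (c : ℝ) (v : Pt) : rot (c • v) = c • rot v := by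
  ext i
  fin_cases i <;> simp [rot]

theorem inner_rot_eq_zero_of_mem_dline {p v x : Pt} (hx : x ∈ dline p v) :
    ⟪x - p, rot v⟫ = 0 := by
  obtain ⟨t, rfl⟩ := hx
  rw [add_sub_cancel_left, real_inner_smul_left, inner_rot_self, mul_zero]

theorem dline_eq_of_mem {p v q : Pt} (hq : q ∈ dline p v) : dline p v = dline q v := by
  obtain ⟨t₀, rfl⟩ := hq
  ext x
  constructor
  · rintro ⟨t, rfl⟩; exact ⟨t - t₀, by module⟩
  · rintro ⟨t, rfl⟩; exact ⟨t₀ + t, by module⟩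

theorem dline_smul (q v : Pt) {c : ℝ} (hc : c ≠ 0) : dline q (c • v) = dline q v := by
  ext x
  constructor
  · rintro ⟨t, rfl⟩; exact ⟨t * c, by module⟩
  · rintro ⟨t, rfl⟩; exact ⟨t / c, by rw [smul_smul, div_mul_cancel₀ _ hc]⟩

theorem eq_tangent_point_of_mem_dline {r : ℝ} {c p v x : Pt} (hv : v ≠ 0)
    (hs : ∀ y ∈ Metric.closedBall c r, 0 ≤ ⟪y - p, rot v⟫)
    (hx : x ∈ dline p v) (hxB : x ∈ Metric.closedBall c r) :
    x = c - (r / ‖rot v‖) • rot v :=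
  eq_sub_smul_of_inner_eq_zero (rot_ne_zero hv) hs hxB (inner_rot_eq_zero_of_mem_dline hx)

theorem exists_pos_smul_eq_sub_of_isFirstOn {r : ℝ} {c₀ c₁ p v F L : Pt} (hv : v ≠ 0)
    (hs : ∀ x ∈ Metric.closedBall c₀ r ∪ Metric.closedBall c₁ r, 0 ≤ ⟪x - p, rot v⟫)
    (hF : IsFirstOn p v ((Metric.closedBall c₀ r ∪ Metric.closedBall c₁ r) ∩ dline p v) F)
    (hL : L ∈ (Metric.closedBall c₀ r ∪ Metric.closedBall c₁ r) ∩ dline p v)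
    (hF₀ : F ∈ Metric.closedBall c₀ r) (hL₁ : L ∈ Metric.closedBall c₁ r) (hFL : F ≠ L) :
    ∃ a : ℝ, 0 < a ∧ c₁ - c₀ = a • v := by
  obtain ⟨⟨-, hFl⟩, s, hFs, hmin⟩ := hF
  obtain ⟨t, hLt⟩ := hL.2
  have hst : s < t := (hmin L t hL hLt).lt_of_ne (by rintro rfl; exact hFL (hFs.trans hLt.symm))
  refine ⟨t - s, sub_pos.mpr hst, ?_⟩
  have hF' := eq_tangent_point_of_mem_dline hv (fun y hy => hs y (Or.inl hy)) hFl hF₀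
  have hL' := eq_tangent_point_of_mem_dline hv (fun y hy => hs y (Or.inr hy)) hL.2 hL₁
  calc c₁ - c₀ = L - F := by rw [hF', hL']; abel
    _ = (t - s) • v := by rw [hLt, hFs]; module

theorem stmt12_general (r : ℝ) (c₀ c₁ : Pt) (D₀ D₁ : Set Pt)
    (hD₀ : D₀ = Metric.closedBall c₀ r) (hD₁ : D₁ = Metric.closedBall c₁ r)
    (p₁ v₁ p₂ v₂ : Pt) (hv₁ : v₁ ≠ 0) (hv₂ : v₂ ≠ 0)
    (hdistinct : dline p₁ v₁ ≠ dline p₂ v₂)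
    (hs₁ : ∀ x ∈ D₀ ∪ D₁, 0 ≤ ⟪x - p₁, rot v₁⟫)
    (hs₂ : ∀ x ∈ D₀ ∪ D₁, 0 ≤ ⟪x - p₂, rot v₂⟫) :
    ¬ ∃ F₁ L₁ F₂ L₂ : Pt,
        IsFirstOn p₁ v₁ ((D₀ ∪ D₁) ∩ dline p₁ v₁) F₁ ∧
        IsLastOn p₁ v₁ ((D₀ ∪ D₁) ∩ dline p₁ v₁) L₁ ∧
        F₁ ∈ D₀ \ D₁ ∧ L₁ ∈ D₁ \ D₀ ∧
        IsFirstOn p₂ v₂ ((D₀ ∪ D₁) ∩ dline p₂ v₂) F₂ ∧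
        IsLastOn p₂ v₂ ((D₀ ∪ D₁) ∩ dline p₂ v₂) L₂ ∧
        F₂ ∈ D₀ \ D₁ ∧ L₂ ∈ D₁ \ D₀ := by
  rintro ⟨F₁, L₁, F₂, L₂, hF₁, hL₁, ⟨hF₁₀, hF₁₁⟩, ⟨hL₁₁, -⟩, hF₂, hL₂, ⟨hF₂₀, hF₂₁⟩, ⟨hL₂₁, -⟩⟩
  subst hD₀ hD₁
  obtain ⟨a₁, ha₁, h₁⟩ := exists_pos_smul_eq_sub_of_isFirstOn hv₁ hs₁ hF₁ hL₁.1 hF₁₀ hL₁₁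
    (ne_of_mem_of_not_mem hL₁₁ hF₁₁).symm
  obtain ⟨a₂, ha₂, h₂⟩ := exists_pos_smul_eq_sub_of_isFirstOn hv₂ hs₂ hF₂ hL₂.1 hF₂₀ hL₂₁
    (ne_of_mem_of_not_mem hL₂₁ hF₂₁).symm
  have hk : 0 < a₁ / a₂ := div_pos ha₁ ha₂
  have hv : v₂ = (a₁ / a₂) • v₁ := by
    rw [div_eq_inv_mul, mul_smul, ← h₁, h₂, inv_smul_smul₀ ha₂.ne']
  have hF : F₁ = F₂ := by
    rw [eq_tangent_point_of_mem_dline hv₁ (fun y hy => hs₁ y (Or.inl hy)) hF₁.1.2 hF₁₀,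
      eq_tangent_point_of_mem_dline hv₂ (fun y hy => hs₂ y (Or.inl hy)) hF₂.1.2 hF₂₀,
      hv, rot_smul_s12, smul_pos_div_norm_smul hk]
  apply hdistinct
  rw [dline_eq_of_mem hF₁.1.2, dline_eq_of_mem hF₂.1.2, hF, hv, dline_smul _ _ hk.ne']

/-- Two closed disks of the same radius cannot cross each other: for two distinct
common supporting lines (both disks on the closed left side of each), it cannot
happen that on both lines the first point of the union lies only in the first
disk while the last point lies only in the second disk. -/
theorem stmt12 (r : ℝ) (hr : 0 < r) (c₀ c₁ : Pt) (D₀ D₁ : Set Pt)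
    (hD₀ : D₀ = Metric.closedBall c₀ r) (hD₁ : D₁ = Metric.closedBall c₁ r)
    (p₁ v₁ p₂ v₂ : Pt) (hv₁ : v₁ ≠ 0) (hv₂ : v₂ ≠ 0)
    (hdistinct : dline p₁ v₁ ≠ dline p₂ v₂)
    (hm₁ : (dline p₁ v₁ ∩ D₀).Nonempty ∧ (dline p₁ v₁ ∩ D₁).Nonempty)
    (hs₁ : ∀ x ∈ D₀ ∪ D₁, 0 ≤ ⟪x - p₁, rot v₁⟫)
    (hm₂ : (dline p₂ v₂ ∩ D₀).Nonempty ∧ (dline p₂ v₂ ∩ D₁).Nonempty)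
    (hs₂ : ∀ x ∈ D₀ ∪ D₁, 0 ≤ ⟪x - p₂, rot v₂⟫) :
    ¬ ∃ F₁ L₁ F₂ L₂ : Pt,
        IsFirstOn p₁ v₁ ((D₀ ∪ D₁) ∩ dline p₁ v₁) F₁ ∧
        IsLastOn p₁ v₁ ((D₀ ∪ D₁) ∩ dline p₁ v₁) L₁ ∧
        F₁ ∈ D₀ \ D₁ ∧ L₁ ∈ D₁ \ D₀ ∧
        IsFirstOn p₂ v₂ ((D₀ ∪ D₁) ∩ dline p₂ v₂) F₂ ∧
        IsLastOn p₂ v₂ ((D₀ ∪ D₁) ∩ dline p₂ v₂) L₂ ∧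
        F₂ ∈ D₀ \ D₁ ∧ L₂ ∈ D₁ \ D₀ :=
  stmt12_general r c₀ c₁ D₀ D₁ hD₀ hD₁ p₁ v₁ p₂ v₂ hv₁ hv₂ hdistinct hs₁ hs₂
end
end

section
/- Let K₀ be a closed disk in ℝ² and let K₁ be isometric to K₀ (hence a closed disk of the same radius). Suppose both K₀ and K₁ are contained in a triangle conv{A₀, A₁, A₂} ⊆ ℝ². Then there exist j ∈ {0,1,2} and k ∈ {0,1} such that K_{1−k} ⊆ conv(K_k ∪ ({A₀, A₁, A₂} \ {A_j})). -/
open RealInnerProductSpace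

noncomputable section

/-!
Write `B = closedBall c r`, `B' = closedBall c' r` and `c' - c = d • u` with `‖u‖ = 1`. By
Hahn–Banach, `B' ⊆ conv (B ∪ S)` as soon as every tangent line of `B'` with outer normal `θ`,
`⟪u, θ⟫ > 0`, has a point of `S` on or beyond it; and a disk inside `conv V` has a vertex on or
beyond each of its tangent lines. The normals for which a given vertex lies beyond the tangent line
form an arc of the unit circle of length at most `π`.

Suppose no vertex can be dropped, neither for `B'` on the side `⟪u, θ⟫ > 0` nor for `B` on the side
`⟪u, θ⟫ < 0`. Then every vertex owns a normal on each side (it is the only vertex beyond the tangent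
line with that normal). A vertex beyond a tangent line of `B` with normal on the side `⟪u, θ⟫ < 0`
is also beyond the parallel tangent line of `B'`, so the arc of each vertex for `B'` contains one of
the two unit normals `±J u` of `u` (the arc of `w` contains `J u` iff `r ≤ ω u w`, as
`⟪w, J u⟫ = ω u w`). Two of the (at least three) vertices pick the same one, say `J u`; on the half
circle `⟪u, θ⟫ > 0` their arcs are then initial segments starting at `J u`, hence nested, and the
vertex with the smaller arc owns no normal there. When the vertices span only a segment `[P, Q]`,
the disk whose centre is nearer to `Q` is covered by the other one and `Q`.
-/

open Metric Module

theorem Finset.le_of_forall_mem_erase_lt {α : Type*} [DecidableEq α] {V : Finset α} {f : α → ℝ}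
    {r : ℝ} {j : α} (h : ∃ p ∈ V, r ≤ f p) (hlt : ∀ p ∈ V.erase j, f p < r) : r ≤ f j := by
  obtain ⟨p, hp, hle⟩ := h
  by_contra hj
  exact (hlt p (Finset.mem_erase.2 ⟨fun h : p = j => hj (h ▸ hle), hp⟩)).not_ge hle

section UnitCircle

theorem cross_bounds_of_unit_circle {x y x' y' : ℝ} (hxy : x ^ 2 + y ^ 2 = 1)
    (hxy' : x' ^ 2 + y' ^ 2 = 1) (hy : 0 < y) (hy' : 0 < y') (hx : x ≤ x') :
    0 ≤ x' * y - x * y' ∧ y ≤ x' * y - x * y' + y' := by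
  have hyy : 0 < y + y' := by linarith
  have h₁ : 0 ≤ (x' * y - x * y') * (y + y') := by
    have : 0 ≤ 1 + x * x' + y * y' := by nlinarith [sq_nonneg (x + x'), sq_nonneg (y + y')]
    have e : (x' * y - x * y') * (y + y') = (x' - x) * (1 + x * x' + y * y') := by
      linear_combination (-x) * hxy' + x' * hxy
    rw [e]; exact mul_nonneg (by linarith) this
  have h₂ : 0 ≤ (x' * y - x * y' + y' - y) * (y + y') := by
    have hx₁ : x ≤ 1 := by nlinarith
    have hx₁' : x' ≤ 1 := by nlinarith
    have : 0 ≤ (1 - x) * (1 - x') + y * y' := by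
      nlinarith [mul_nonneg (sub_nonneg.2 hx₁) (sub_nonneg.2 hx₁'), mul_pos hy hy']
    have e : (x' * y - x * y' + y' - y) * (y + y') = (x' - x) * ((1 - x) * (1 - x') + y * y') := by
      linear_combination (1 - x) * hxy' + (x' - 1) * hxy
    rw [e]; exact mul_nonneg (by linarith) this
  exact ⟨nonneg_of_mul_nonneg_left h₁ hyy, by linarith [nonneg_of_mul_nonneg_left h₂ hyy]⟩

theorem le_mul_add_mul_of_le_of_unit_circle {p q r x y x' y' : ℝ} (hr : 0 ≤ r) (hp : r ≤ p)
    (hxy : x ^ 2 + y ^ 2 = 1) (hxy' : x' ^ 2 + y' ^ 2 = 1) (hy : 0 < y) (hy' : 0 < y')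
    (hx : x ≤ x') (h : r ≤ p * x + q * y) : r ≤ p * x' + q * y' := by
  -- `(x', y') = (D / y) • (1, 0) + (y' / y) • (x, y)` with `D = x' * y - x * y'`, and the two
  -- coefficients are nonnegative with sum at least `1`.
  obtain ⟨hD, hD'⟩ := cross_bounds_of_unit_circle hxy hxy' hy hy' hx
  refine le_of_mul_le_mul_left ?_ hy
  nlinarith [mul_nonneg hD (sub_nonneg.2 hp), mul_nonneg hy'.le (sub_nonneg.2 h),
    mul_nonneg hr (sub_nonneg.2 hD')]

theorem le_or_le_neg_of_unit_circle {p q r x y x' y' : ℝ}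
    (hxy : x ^ 2 + y ^ 2 = 1) (hxy' : x' ^ 2 + y' ^ 2 = 1) (hy : 0 < y) (hy' : y' < 0)
    (h : r ≤ p * x + q * y) (h' : r ≤ p * x' + q * y') : r ≤ p ∨ r ≤ -p := by
  by_contra! hp
  have hpr : |p| < r := abs_lt.2 ⟨by linarith, hp.1⟩
  have bound : ∀ {x y : ℝ}, x ^ 2 + y ^ 2 = 1 → p * x < r := fun {x y} hxy => by
    have : |x| ≤ 1 := by rw [← abs_one, ← sq_le_sq]; nlinarith
    calc p * x ≤ |p| * |x| := by rw [← abs_mul]; exact le_abs_self _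
      _ ≤ |p| := mul_le_of_le_one_right (abs_nonneg p) this
      _ < r := hpr
  have := bound hxy
  have := bound hxy'
  rcases le_total 0 q with hq | hq <;> nlinarith

end UnitCircle

section Support

variable {E : Type*} [NormedAddCommGroup E] [InnerProductSpace ℝ E]

theorem exists_le_inner_sub_of_closedBall_subset_convexHull {S : Set E} {c θ : E} {r : ℝ}
    (hr : 0 ≤ r) (hθ : ‖θ‖ = 1) (h : closedBall c r ⊆ convexHull ℝ S) :
    ∃ p ∈ S, r ≤ ⟪p - c, θ⟫ := by
  have hmem : c + r • θ ∈ closedBall c r := by simp [norm_smul, hθ, abs_of_nonneg hr]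
  obtain ⟨p, hp, hle⟩ := ((innerₛₗ ℝ θ).convexOn convex_univ).exists_ge_of_mem_convexHull
    (Set.subset_univ S) (h hmem)
  simp only [innerₛₗ_apply_apply, inner_add_right, real_inner_smul_right,
    real_inner_self_eq_norm_sq, hθ, one_pow, mul_one] at hle
  refine ⟨p, hp, ?_⟩
  rw [inner_sub_left, real_inner_comm θ p, real_inner_comm θ c]
  linarith

theorem exists_norm_eq_one_forall_inner_lt [CompleteSpace E] {C : Set E} {x : E}
    (hC : Convex ℝ C) (hCc : IsClosed C) (hne : C.Nonempty) (hx : x ∉ C) :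
    ∃ θ : E, ‖θ‖ = 1 ∧ ∀ y ∈ C, ⟪y, θ⟫ < ⟪x, θ⟫ := by
  obtain ⟨f, U, hfC, hfx⟩ := geometric_hahn_banach_closed_point hC hCc hx
  set v := (InnerProductSpace.toDual ℝ E).symm f
  have hv : ∀ y, ⟪y, v⟫ = f y := fun y => by
    rw [real_inner_comm]; exact InnerProductSpace.toDual_symm_apply
  have hv₀ : v ≠ 0 := by
    obtain ⟨y, hy⟩ := hne
    intro h
    have := (hfC y hy).trans hfx
    rw [← hv, ← hv, h, inner_zero_right, inner_zero_right] at this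
    exact lt_irrefl _ this
  refine ⟨‖v‖⁻¹ • v, norm_smul_inv_norm hv₀, fun y hy => ?_⟩
  simp only [real_inner_smul_right, hv]
  exact mul_lt_mul_of_pos_left ((hfC y hy).trans hfx) (by positivity)

end Support

section ConvexJoin

variable {F : Type*} [AddCommGroup F] [Module ℝ F] [TopologicalSpace F] [ContinuousAdd F]
  [ContinuousSMul ℝ F]

theorem IsCompact.convexJoin {s t : Set F} (hs : IsCompact s) (ht : IsCompact t) :
    IsCompact (convexJoin ℝ s t) := by
  have : _root_.convexJoin ℝ s t =
      (fun q : (F × F) × ℝ => (1 - q.2) • q.1.1 + q.2 • q.1.2) '' ((s ×ˢ t) ×ˢ Set.Icc 0 1) := by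
    ext x
    simp only [mem_convexJoin, segment_eq_image, Set.mem_image, Set.mem_prod, Prod.exists]
    constructor
    · rintro ⟨a, ha, b, hb, θ, hθ, rfl⟩
      exact ⟨a, b, θ, ⟨⟨ha, hb⟩, hθ⟩, rfl⟩
    · rintro ⟨a, b, θ, ⟨⟨ha, hb⟩, hθ⟩, rfl⟩
      exact ⟨a, ha, b, hb, θ, hθ, rfl⟩
  rw [this]
  exact ((hs.prod ht).prod isCompact_Icc).image (by fun_prop)

theorem isCompact_convexHull_union {s t : Set F} (hs : IsCompact (convexHull ℝ s))
    (ht : IsCompact (convexHull ℝ t)) : IsCompact (convexHull ℝ (s ∪ t)) := by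
  rcases s.eq_empty_or_nonempty with rfl | hs₀
  · simpa using ht
  rcases t.eq_empty_or_nonempty with rfl | ht₀
  · simpa using hs
  rw [convexHull_union hs₀ ht₀]
  exact hs.convexJoin ht

end ConvexJoin

section Hull

variable {E : Type*} [NormedAddCommGroup E] [InnerProductSpace ℝ E] [FiniteDimensional ℝ E]

theorem closedBall_subset_convexHull_union {c c' : E} {r : ℝ} {S : Set E} (hr : 0 ≤ r)
    (hS : S.Finite) (h : ∀ θ, ‖θ‖ = 1 → 0 < ⟪c' - c, θ⟫ → ∃ p ∈ S, r ≤ ⟪p - c', θ⟫) :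
    closedBall c' r ⊆ convexHull ℝ (closedBall c r ∪ S) := by
  intro x hx
  by_contra hxC
  have hcompact : IsCompact (convexHull ℝ (closedBall c r ∪ S)) :=
    isCompact_convexHull_union
      (by rw [(convex_closedBall c r).convexHull_eq]; exact isCompact_closedBall c r)
      (hS.isCompact_convexHull ℝ)
  have hsub := subset_convexHull ℝ (closedBall c r ∪ S)
  obtain ⟨θ, hθ, hsep⟩ := exists_norm_eq_one_forall_inner_lt (convex_convexHull ℝ _)
    hcompact.isClosed ⟨c, hsub (Or.inl (mem_closedBall_self hr))⟩ hxC
  have hcθ : ⟪c, θ⟫ + r < ⟪x, θ⟫ := by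
    have hmem : c + r • θ ∈ closedBall c r := by simp [norm_smul, hθ, abs_of_nonneg hr]
    have := hsep _ (hsub (Or.inl hmem))
    rwa [inner_add_left, real_inner_smul_left, real_inner_self_eq_norm_sq, hθ, one_pow,
      mul_one] at this
  have hxθ : ⟪x, θ⟫ ≤ ⟪c', θ⟫ + r := by
    have := (real_inner_le_norm (x - c') θ).trans_eq (by rw [hθ, mul_one])
    rw [inner_sub_left] at this
    linarith [mem_closedBall_iff_norm.1 hx]
  obtain ⟨p, hpS, hp⟩ := h θ hθ (by rw [inner_sub_left]; linarith)
  have := hsep p (hsub (Or.inr hpS))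
  rw [inner_sub_left] at hp
  linarith

theorem closedBall_subset_convexHull_union_singleton_of_sub_eq_smul {c c' P Q : E} {r s : ℝ}
    (hr : 0 ≤ r) (hs : 0 ≤ s) (hcc' : c' - c = s • (Q - P))
    (h' : closedBall c' r ⊆ segment ℝ P Q) :
    closedBall c' r ⊆ convexHull ℝ (closedBall c r ∪ {Q}) := by
  refine closedBall_subset_convexHull_union hr (Set.finite_singleton Q)
    fun θ hθ hpos => ⟨Q, rfl, ?_⟩
  rw [← convexHull_pair] at h'
  obtain ⟨p, rfl | rfl, hle⟩ := exists_le_inner_sub_of_closedBall_subset_convexHull hr hθ h'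
  · have : 0 < ⟪Q - p, θ⟫ := by
      rw [hcc', real_inner_smul_left] at hpos
      exact pos_of_mul_pos_right hpos hs
    rw [inner_sub_left] at this hle ⊢
    linarith
  · exact hle

theorem closedBall_subset_convexHull_union_or_of_subset_segment {c c' P Q : E} {r : ℝ}
    (hr : 0 ≤ r) (h : closedBall c r ⊆ segment ℝ P Q) (h' : closedBall c' r ⊆ segment ℝ P Q) :
    closedBall c' r ⊆ convexHull ℝ (closedBall c r ∪ {Q}) ∨
      closedBall c r ⊆ convexHull ℝ (closedBall c' r ∪ {Q}) := by
  obtain ⟨t, -, rfl⟩ := (segment_eq_image' ℝ P Q ▸ h (mem_closedBall_self hr))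
  obtain ⟨t', -, rfl⟩ := (segment_eq_image' ℝ P Q ▸ h' (mem_closedBall_self hr))
  rcases le_total t t' with htt | htt
  · exact Or.inl (closedBall_subset_convexHull_union_singleton_of_sub_eq_smul hr
      (sub_nonneg.2 htt) (by module) h')
  · exact Or.inr (closedBall_subset_convexHull_union_singleton_of_sub_eq_smul hr
      (sub_nonneg.2 htt) (by module) h)

end Hull

namespace Orientation

variable {E : Type*} [NormedAddCommGroup E] [InnerProductSpace ℝ E] [Fact (finrank ℝ E = 2)]
  (o : Orientation ℝ E (Fin 2))

local notation "ω" => o.areaForm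

theorem inner_eq_areaForm_mul_add {u : E} (hu : ‖u‖ = 1) (w θ : E) :
    ⟪w, θ⟫ = ω u w * ω u θ + ⟪u, w⟫ * ⟪u, θ⟫ := by
  have := o.inner_mul_inner_add_areaForm_mul_areaForm u w θ
  rw [hu, one_pow, one_mul] at this
  linarith

theorem areaForm_sq_add_inner_sq {u θ : E} (hu : ‖u‖ = 1) (hθ : ‖θ‖ = 1) :
    ω u θ ^ 2 + ⟪u, θ⟫ ^ 2 = 1 := by
  have := o.inner_sq_add_areaForm_sq u θ
  rw [hu, hθ] at this
  linarith

theorem le_inner_of_areaForm_le {u w θ θ' : E} {r : ℝ} (hu : ‖u‖ = 1) (hr : 0 ≤ r)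
    (hw : r ≤ ω u w) (hθ : ‖θ‖ = 1) (hθ' : ‖θ'‖ = 1) (hpos : 0 < ⟪u, θ⟫) (hpos' : 0 < ⟪u, θ'⟫)
    (hle : ω u θ ≤ ω u θ') (h : r ≤ ⟪w, θ⟫) : r ≤ ⟪w, θ'⟫ := by
  rw [o.inner_eq_areaForm_mul_add hu] at h ⊢
  exact le_mul_add_mul_of_le_of_unit_circle hr hw (o.areaForm_sq_add_inner_sq hu hθ)
    (o.areaForm_sq_add_inner_sq hu hθ') hpos hpos' hle h

theorem le_inner_or_le_inner_of_le_areaForm {u a b θa θb : E} {r : ℝ} (hu : ‖u‖ = 1)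
    (hr : 0 ≤ r) (ha : r ≤ ω u a) (hb : r ≤ ω u b) (hθa : ‖θa‖ = 1) (hθb : ‖θb‖ = 1)
    (hposa : 0 < ⟪u, θa⟫) (hposb : 0 < ⟪u, θb⟫) (haθ : r ≤ ⟪a, θa⟫) (hbθ : r ≤ ⟪b, θb⟫) :
    r ≤ ⟪b, θa⟫ ∨ r ≤ ⟪a, θb⟫ := by
  rcases le_total (ω u θa) (ω u θb) with h | h
  · exact Or.inr (o.le_inner_of_areaForm_le hu hr ha hθa hθb hposa hposb h haθ)
  · exact Or.inl (o.le_inner_of_areaForm_le hu hr hb hθb hθa hposb hposa h hbθ)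

theorem le_areaForm_or_le_neg_areaForm {u w θ ψ : E} {r : ℝ} (hu : ‖u‖ = 1) (hθ : ‖θ‖ = 1)
    (hψ : ‖ψ‖ = 1) (hpos : 0 < ⟪u, θ⟫) (hneg : ⟪u, ψ⟫ < 0) (h : r ≤ ⟪w, θ⟫) (h' : r ≤ ⟪w, ψ⟫) :
    r ≤ ω u w ∨ r ≤ -ω u w := by
  rw [o.inner_eq_areaForm_mul_add hu] at h h'
  exact le_or_le_neg_of_unit_circle (o.areaForm_sq_add_inner_sq hu hθ)
    (o.areaForm_sq_add_inner_sq hu hψ) hpos hneg h h'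

theorem eq_of_forall_mem_erase_inner_lt [DecidableEq E] {V : Finset E} {u c a b θa θb : E}
    {r : ℝ} (hu : ‖u‖ = 1) (hr : 0 ≤ r) (H : ∀ θ, ‖θ‖ = 1 → ∃ p ∈ V, r ≤ ⟪p - c, θ⟫)
    (ha : a ∈ V) (hb : b ∈ V) (hωa : r ≤ ω u (a - c)) (hωb : r ≤ ω u (b - c))
    (hθa : ‖θa‖ = 1) (hθb : ‖θb‖ = 1) (hposa : 0 < ⟪u, θa⟫) (hposb : 0 < ⟪u, θb⟫)
    (hlta : ∀ p ∈ V.erase a, ⟪p - c, θa⟫ < r) (hltb : ∀ p ∈ V.erase b, ⟪p - c, θb⟫ < r) :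
    a = b := by
  by_contra hab
  rcases o.le_inner_or_le_inner_of_le_areaForm hu hr hωa hωb hθa hθb hposa hposb
    (Finset.le_of_forall_mem_erase_lt (f := (⟪· - c, θa⟫)) (H θa hθa) hlta)
    (Finset.le_of_forall_mem_erase_lt (f := (⟪· - c, θb⟫)) (H θb hθb) hltb) with h | h
  · exact (hlta b (Finset.mem_erase.2 ⟨Ne.symm hab, hb⟩)).not_ge h
  · exact (hltb a (Finset.mem_erase.2 ⟨hab, ha⟩)).not_ge h

end Orientation

section Plane

variable {E : Type*} [NormedAddCommGroup E] [InnerProductSpace ℝ E] [Fact (finrank ℝ E = 2)]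

attribute [local instance] FiniteDimensional.of_fact_finrank_eq_two

theorem exists_erase_supports_of_two_lt_card [DecidableEq E] {V : Finset E} {u c c' : E}
    {d r : ℝ} (hu : ‖u‖ = 1) (hd : 0 ≤ d) (hcu : c' - c = d • u) (hr : 0 ≤ r)
    (hV : 2 < V.card) (H : ∀ θ, ‖θ‖ = 1 → ∃ p ∈ V, r ≤ ⟪p - c, θ⟫)
    (H' : ∀ θ, ‖θ‖ = 1 → ∃ p ∈ V, r ≤ ⟪p - c', θ⟫) :
    (∃ j ∈ V, ∀ θ, ‖θ‖ = 1 → 0 < ⟪u, θ⟫ → ∃ p ∈ V.erase j, r ≤ ⟪p - c', θ⟫) ∨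
      ∃ j ∈ V, ∀ θ, ‖θ‖ = 1 → ⟪u, θ⟫ < 0 → ∃ p ∈ V.erase j, r ≤ ⟪p - c, θ⟫ := by
  let o : Orientation ℝ E (Fin 2) := (finBasisOfFinrankEq ℝ E Fact.out).orientation
  by_contra! hcon
  obtain ⟨hθ, hψ⟩ := hcon
  -- `θ j` is a normal owned by `j` for the disk at `c'`, `ψ j` one owned for the disk at `c`
  choose! θ hθ₁ hθpos hθlt using hθ
  choose! ψ hψ₁ hψneg hψlt using hψ
  have hsub : ∀ p, p - c' = (p - c) - d • u := fun p => by rw [← hcu]; abel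
  have hsign : ∀ j ∈ V, r ≤ o.areaForm u (j - c') ∨ r ≤ -o.areaForm u (j - c') := by
    intro j hj
    refine o.le_areaForm_or_le_neg_areaForm hu (hθ₁ j hj) (hψ₁ j hj) (hθpos j hj) (hψneg j hj)
      (Finset.le_of_forall_mem_erase_lt (f := (⟪· - c', θ j⟫)) (H' _ (hθ₁ j hj)) (hθlt j hj)) ?_
    have := Finset.le_of_forall_mem_erase_lt (f := (⟪· - c, ψ j⟫)) (H _ (hψ₁ j hj)) (hψlt j hj)
    rw [hsub, inner_sub_left, real_inner_smul_left]
    nlinarith [hψneg j hj]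
  obtain ⟨a, ha, b, hb, hab, hsame⟩ := Finset.exists_ne_map_eq_of_card_lt_of_maps_to
    (t := (Finset.univ : Finset Prop)) (f := fun p => r ≤ o.areaForm u (p - c'))
    (by simpa using hV) (fun _ _ => Finset.mem_univ _)
  by_cases hωa : r ≤ o.areaForm u (a - c')
  · exact hab (o.eq_of_forall_mem_erase_inner_lt hu hr H' ha hb hωa (hsame ▸ hωa) (hθ₁ a ha)
      (hθ₁ b hb) (hθpos a ha) (hθpos b hb) (hθlt a ha) (hθlt b hb))
  · have hneg : ∀ p ∈ V, ¬ r ≤ o.areaForm u (p - c') → r ≤ o.areaForm (-u) (p - c) :=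
      fun p hp h => by simpa [hsub, o.areaForm_apply_self] using (hsign p hp).resolve_left h
    exact hab (o.eq_of_forall_mem_erase_inner_lt (by rwa [norm_neg]) hr H ha hb
      (hneg a ha hωa) (hneg b hb (hsame ▸ hωa)) (hψ₁ a ha) (hψ₁ b hb)
      (by simpa using hψneg a ha) (by simpa using hψneg b hb) (hψlt a ha) (hψlt b hb))

theorem exists_closedBall_subset_convexHull_union_erase_of_two_lt_card [DecidableEq E]
    {V : Finset E} {c c' : E} {r : ℝ} (hr : 0 ≤ r) (hcc' : c ≠ c') (hV : 2 < V.card)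
    (h : closedBall c r ⊆ convexHull ℝ ↑V) (h' : closedBall c' r ⊆ convexHull ℝ ↑V) :
    ∃ p ∈ V, closedBall c' r ⊆ convexHull ℝ (closedBall c r ∪ ↑(V.erase p)) ∨
      closedBall c r ⊆ convexHull ℝ (closedBall c' r ∪ ↑(V.erase p)) := by
  have hcc'₀ : c' - c ≠ 0 := sub_ne_zero.2 hcc'.symm
  set d := ‖c' - c‖
  have hd : 0 < d := norm_pos_iff.2 hcc'₀
  set u := d⁻¹ • (c' - c)
  have hu : ‖u‖ = 1 := by rw [norm_smul, norm_inv, norm_norm, inv_mul_cancel₀ hd.ne']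
  have hcu : c' - c = d • u := (smul_inv_smul₀ hd.ne' _).symm
  have hinner : ∀ θ, ⟪c' - c, θ⟫ = d * ⟪u, θ⟫ := fun θ => by
    rw [← real_inner_smul_left, ← hcu]
  rcases exists_erase_supports_of_two_lt_card hu hd.le hcu hr hV
    (fun θ hθ => exists_le_inner_sub_of_closedBall_subset_convexHull hr hθ h)
    (fun θ hθ => exists_le_inner_sub_of_closedBall_subset_convexHull hr hθ h')
    with ⟨j, hj, hcov⟩ | ⟨j, hj, hcov⟩
  · refine ⟨j, hj, Or.inl (closedBall_subset_convexHull_union hr (V.erase j).finite_toSet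
      fun θ hθ hpos => hcov θ hθ ?_)⟩
    rw [hinner] at hpos
    exact pos_of_mul_pos_right hpos hd.le
  · refine ⟨j, hj, Or.inr (closedBall_subset_convexHull_union hr (V.erase j).finite_toSet
      fun θ hθ hpos => hcov θ hθ ?_)⟩
    rw [← neg_sub, inner_neg_left, hinner] at hpos
    exact neg_of_mul_neg_right (neg_pos.1 hpos) hd.le

theorem exists_closedBall_subset_convexHull_union_erase [DecidableEq E] {V : Finset E}
    {c c' : E} {r : ℝ} (hr : 0 ≤ r) (h : closedBall c r ⊆ convexHull ℝ ↑V)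
    (h' : closedBall c' r ⊆ convexHull ℝ ↑V) :
    ∃ p ∈ V, closedBall c' r ⊆ convexHull ℝ (closedBall c r ∪ ↑(V.erase p)) ∨
      closedBall c r ⊆ convexHull ℝ (closedBall c' r ∪ ↑(V.erase p)) := by
  have hc := h (mem_closedBall_self hr)
  have hc' := h' (mem_closedBall_self hr)
  have hV₀ : V.Nonempty := Finset.coe_nonempty.1 (convexHull_nonempty_iff.1 ⟨c, hc⟩)
  rcases eq_or_ne c c' with rfl | hcc'
  · obtain ⟨p, hp⟩ := hV₀
    exact ⟨p, hp, Or.inl (Set.subset_union_left.trans (subset_convexHull ℝ _))⟩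
  rcases lt_or_ge 2 V.card with hV | hV
  · exact exists_closedBall_subset_convexHull_union_erase_of_two_lt_card hr hcc' hV h h'
  have := Finset.card_pos.2 hV₀
  interval_cases hcard : V.card
  · obtain ⟨P, rfl⟩ := Finset.card_eq_one.1 hcard
    simp only [Finset.coe_singleton, convexHull_singleton, Set.mem_singleton_iff] at hc hc'
    exact absurd (hc.trans hc'.symm) hcc'
  · obtain ⟨P, Q, hPQ, rfl⟩ := Finset.card_eq_two.1 hcard
    refine ⟨P, Finset.mem_insert_self P {Q}, ?_⟩
    rw [Finset.erase_insert (by simpa using hPQ), Finset.coe_singleton]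
    rw [Finset.coe_pair, convexHull_pair] at h h'
    exact closedBall_subset_convexHull_union_or_of_subset_segment hr h h'

end Plane

/-- Adaricheva–Bolat: if a closed disk and an isometric copy of it are contained
in a triangle, then one of them is contained in the convex hull of the other
together with two of the three vertices. -/
theorem stmt16 (c : Pt) (r : ℝ) (hr : 0 ≤ r) (K : Fin 2 → Set Pt)
    (hK0 : K 0 = Metric.closedBall c r)
    (φ : Pt ≃ᵢ Pt) (hK1 : K 1 = φ '' K 0)
    (A : Fin 3 → Pt)
    (hsub : ∀ i : Fin 2, K i ⊆ convexHull ℝ {A 0, A 1, A 2}) :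
    ∃ (j : Fin 3) (k : Fin 2),
      K (1 - k) ⊆ convexHull ℝ (K k ∪ (({A 0, A 1, A 2} : Set Pt) \ {A j})) := by
  classical
  have : Fact (finrank ℝ Pt = 2) := ⟨finrank_euclideanSpace_fin⟩
  have hK1' : K 1 = closedBall (φ c) r := by rw [hK1, hK0, IsometryEquiv.image_closedBall]
  have hV : ({A 0, A 1, A 2} : Set Pt) = ↑({A 0, A 1, A 2} : Finset Pt) := by simp
  obtain ⟨p, hp, hcases⟩ := exists_closedBall_subset_convexHull_union_erase hr
    (hK0 ▸ hV ▸ hsub 0) (hK1' ▸ hV ▸ hsub 1)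
  obtain ⟨j, rfl⟩ : ∃ j, A j = p := by
    simp only [Finset.mem_insert, Finset.mem_singleton] at hp
    rcases hp with rfl | rfl | rfl
    exacts [⟨0, rfl⟩, ⟨1, rfl⟩, ⟨2, rfl⟩]
  rcases hcases with h | h
  · exact ⟨j, 0, by simpa [hK0, hK1'] using h⟩
  · exact ⟨j, 1, by simpa [hK0, hK1'] using h⟩
end
end
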